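/- arXiv:1501.05448 — 2 statements merged into one kernel-verified Lean document; each statement's English description precedes it below -/
import Mathlib

section
/- Let φ ∈ L¹(Ω), 0 < m(Ω) < ∞, α ∈ (0,1), Θ = {θ : Ω → [0,1] measurable, ∫_Ω θ = α·m(Ω)}, and c_φ, α̲_φ as above. Then for every θ ∈ Θ, ∫_Ω θφ ≤ ∫_{ {φ > c_φ} } φ + (α - α̲_φ)·m(Ω)·c_φ. -/
/-! Since `0 ≤ θ ≤ 1`, pointwise `θ (φ - c) ≤ 𝟙_{φ > c} (φ - c)` for every constant `c`.
Integrating over `Ω` and using `∫ θ = α m(Ω)` gives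
`∫ θ φ ≤ ∫_{φ > c} φ + c (α m(Ω) - m({φ > c}))`, which for `c = c_φ` is the claim. -/

open MeasureTheory Set

lemma mul_sub_le_indicator_of_mem_Icc {X : Type*} {φ : X → ℝ} {t c : ℝ} (ht : t ∈ Icc 0 1) (x : X) :
    t * (φ x - c) ≤ {x | c < φ x}.indicator (fun x => φ x - c) x := by
  by_cases hx : c < φ x
  · rw [indicator_of_mem (show x ∈ {x | c < φ x} from hx)]
    nlinarith [ht.2]
  · rw [indicator_of_notMem (show x ∉ {x | c < φ x} from hx)]
    nlinarith [ht.1, not_lt.1 hx]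

section Bathtub

variable {X : Type*} [MeasurableSpace X] {μ : Measure X} {s : Set X} {θ φ : X → ℝ}

lemma ae_restrict_norm_le_one_of_mem_Icc (hs : MeasurableSet s) (hθ01 : ∀ x ∈ s, θ x ∈ Icc 0 1) :
    ∀ᵐ x ∂μ.restrict s, ‖θ x‖ ≤ 1 :=
  (ae_restrict_iff' hs).2 <| .of_forall fun x hx => by
    rw [Real.norm_eq_abs, abs_le]
    exact ⟨by linarith [(hθ01 x hx).1], (hθ01 x hx).2⟩

variable (hs : MeasurableSet s) (hθm : AEStronglyMeasurable θ (μ.restrict s))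
  (hθ01 : ∀ x ∈ s, θ x ∈ Icc 0 1)
include hs hθm hθ01

lemma integrableOn_of_mem_Icc (hμs : μ s ≠ ⊤) : IntegrableOn θ s μ :=
  .of_bound hμs.lt_top hθm 1 (ae_restrict_norm_le_one_of_mem_Icc hs hθ01)

lemma integrableOn_mul_of_mem_Icc {g : X → ℝ} (hg : IntegrableOn g s μ) :
    IntegrableOn (fun x => θ x * g x) s μ :=
  hg.bdd_mul hθm (ae_restrict_norm_le_one_of_mem_Icc hs hθ01)

lemma setIntegral_mul_sub_le (hφm : Measurable φ) (hφ : IntegrableOn φ s μ) (hμs : μ s ≠ ⊤)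
    (c : ℝ) :
    ∫ x in s, θ x * (φ x - c) ∂μ ≤ ∫ x in {x ∈ s | c < φ x}, (φ x - c) ∂μ := by
  have hφc : IntegrableOn (fun x => φ x - c) s μ := hφ.sub (integrableOn_const hμs)
  have hA : MeasurableSet {x | c < φ x} := measurableSet_lt measurable_const hφm
  calc ∫ x in s, θ x * (φ x - c) ∂μ
      ≤ ∫ x in s, {x | c < φ x}.indicator (fun x => φ x - c) x ∂μ :=
        setIntegral_mono_on (integrableOn_mul_of_mem_Icc hs hθm hθ01 hφc) (hφc.indicator hA) hs
          fun x hx => mul_sub_le_indicator_of_mem_Icc (hθ01 x hx) x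
    _ = ∫ x in {x ∈ s | c < φ x}, (φ x - c) ∂μ := setIntegral_indicator hA

theorem setIntegral_mul_le_of_mem_Icc (hφm : Measurable φ) (hφ : IntegrableOn φ s μ)
    (hμs : μ s ≠ ⊤) (c : ℝ) :
    ∫ x in s, θ x * φ x ∂μ
      ≤ ∫ x in {x ∈ s | c < φ x}, φ x ∂μ + c * (∫ x in s, θ x ∂μ - μ.real {x ∈ s | c < φ x}) := by
  have hAs : {x ∈ s | c < φ x} ⊆ s := fun x hx => hx.1
  have hμA : μ {x ∈ s | c < φ x} ≠ ⊤ := ne_top_of_le_ne_top hμs (measure_mono hAs)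
  have key := setIntegral_mul_sub_le hs hθm hθ01 hφm hφ hμs c
  simp only [mul_sub] at key
  rw [integral_sub (integrableOn_mul_of_mem_Icc hs hθm hθ01 hφ)
      ((integrableOn_of_mem_Icc hs hθm hθ01 hμs).mul_const c),
    integral_sub (hφ.mono_set hAs) (integrableOn_const hμA), integral_mul_const,
    setIntegral_const, smul_eq_mul] at key
  linarith

end Bathtub

theorem stmt7_general {d : ℕ} (Ω : Set (Fin d → ℝ)) (hΩ : MeasurableSet Ω)
    (hpos : 0 < volume Ω) (hfin : volume Ω ≠ ⊤)
    (α : ℝ)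
    (φ : (Fin d → ℝ) → ℝ) (hφm : Measurable φ) (hφ : IntegrableOn φ Ω)
    (cφ : ℝ)
    (θ : (Fin d → ℝ) → ℝ) (hθm : Measurable θ)
    (hθ01 : ∀ x ∈ Ω, θ x ∈ Set.Icc (0:ℝ) 1)
    (hθint : ∫ x in Ω, θ x = α * (volume Ω).toReal) :
    ∫ x in Ω, θ x * φ x
      ≤ (∫ x in {x ∈ Ω | cφ < φ x}, φ x)
        + (α - (volume {x ∈ Ω | cφ < φ x}).toReal / (volume Ω).toReal)
          * (volume Ω).toReal * cφ := by
  have hm0 : (volume Ω).toReal ≠ 0 := (ENNReal.toReal_pos hpos.ne' hfin).ne'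
  have h := setIntegral_mul_le_of_mem_Icc hΩ hθm.aestronglyMeasurable hθ01 hφm hφ hfin cφ
  rw [hθint, Measure.real_def] at h
  convert h using 2
  field_simp

theorem stmt7 {d : ℕ} (Ω : Set (Fin d → ℝ)) (hΩ : MeasurableSet Ω)
    (hpos : 0 < volume Ω) (hfin : volume Ω ≠ ⊤)
    (α : ℝ) (hα : α ∈ Set.Ioo (0:ℝ) 1)
    (φ : (Fin d → ℝ) → ℝ) (hφm : Measurable φ) (hφ : IntegrableOn φ Ω)
    (cφ : ℝ)
    (hc : IsGreatest {c : ℝ | α * (volume Ω).toReal ≤ (volume {x ∈ Ω | c ≤ φ x}).toReal} cφ)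
    (θ : (Fin d → ℝ) → ℝ) (hθm : Measurable θ)
    (hθ01 : ∀ x ∈ Ω, θ x ∈ Set.Icc (0:ℝ) 1)
    (hθint : ∫ x in Ω, θ x = α * (volume Ω).toReal) :
    ∫ x in Ω, θ x * φ x
      ≤ (∫ x in {x ∈ Ω | cφ < φ x}, φ x)
        + (α - (volume {x ∈ Ω | cφ < φ x}).toReal / (volume Ω).toReal)
          * (volume Ω).toReal * cφ :=
  stmt7_general Ω hΩ hpos hfin α φ hφm hφ cφ θ hθm hθ01 hθint
end

section
/- With notation as above (φ ∈ L¹(Ω), 0 < m(Ω) < ∞, α ∈ (0,1), Θ, c_φ, α̲_φ), a function θ̄ ∈ Θ attains sup_{θ∈Θ} ∫_Ω θφ if and only if θ̄ = 1 a.e. on {φ > c_φ} and θ̄ = 0 a.e. on {φ < c_φ}. In particular the supremum is attained. -/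
open MeasureTheory Set

/-!
If `θ₀` equals `1` on `{φ > c}` and `0` on `{φ < c}`, then for every `θ` of the same mass
`∫ (θ₀ - θ) φ = ∫ (θ₀ - θ) (φ - c)`, and this integrand is pointwise nonnegative; it vanishes
a.e. exactly when `θ` has the same shape. Such a `θ₀` exists because maximality of `c` gives
`m {φ > c} ≤ α m(Ω) ≤ m {φ ≥ c}`, so a constant value on the level set `{φ = c}` supplies the
missing mass.
-/

namespace Bathtub

variable {X : Type*} [MeasurableSpace X] {μ : Measure X} {Ω : Set X} {φ θ θ₁ θ₂ : X → ℝ}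
  {c m : ℝ}

def admissible (μ : Measure X) (Ω : Set X) (m : ℝ) : Set (X → ℝ) :=
  {θ | Measurable θ ∧ (∀ x ∈ Ω, θ x ∈ Icc (0 : ℝ) 1) ∧ ∫ x in Ω, θ x ∂μ = m}

def FillsAbove (μ : Measure X) (Ω : Set X) (φ : X → ℝ) (c : ℝ) (θ : X → ℝ) : Prop :=
  (∀ᵐ x ∂(μ.restrict {x ∈ Ω | c < φ x}), θ x = 1) ∧
    (∀ᵐ x ∂(μ.restrict {x ∈ Ω | φ x < c}), θ x = 0)

lemma measure_sep_lt_le_of_forall_lt {M : ENNReal}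
    (h : ∀ c' > c, μ {x ∈ Ω | c' ≤ φ x} ≤ M) : μ {x ∈ Ω | c < φ x} ≤ M := by
  obtain ⟨u, hu_anti, hu_gt, hu_lim⟩ := exists_seq_strictAnti_tendsto c
  have hunion : {x ∈ Ω | c < φ x} = ⋃ n, {x ∈ Ω | u n ≤ φ x} := by
    ext x
    simp only [mem_ofPred_eq, mem_iUnion, exists_and_left]
    exact and_congr_right fun _ => ⟨fun hx => (hu_lim.eventually (gt_mem_nhds hx)).exists.imp
      fun _ => le_of_lt, fun ⟨n, hn⟩ => (hu_gt n).trans_le hn⟩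
  have hmono : Monotone fun n => {x ∈ Ω | u n ≤ φ x} :=
    fun _ _ hmn _ hx => ⟨hx.1, (hu_anti.antitone hmn).trans hx.2⟩
  rw [hunion, hmono.measure_iUnion]
  exact iSup_le fun n => h _ (hu_gt n)

lemma toReal_measure_sep_lt_le_of_isGreatest (hfin : μ Ω ≠ ⊤)
    (hc : IsGreatest {c' : ℝ | m ≤ (μ {x ∈ Ω | c' ≤ φ x}).toReal} c) :
    (μ {x ∈ Ω | c < φ x}).toReal ≤ m := by
  have hlt : ∀ c' > c, (μ {x ∈ Ω | c' ≤ φ x}).toReal < m :=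
    fun c' hc' => not_le.1 fun hmem => (hc.2 hmem).not_gt hc'
  have hm : 0 ≤ m := ENNReal.toReal_nonneg.trans (hlt _ (lt_add_one c)).le
  refine ENNReal.toReal_le_of_le_ofReal hm (measure_sep_lt_le_of_forall_lt fun c' hc' => ?_)
  have hfin' : μ {x ∈ Ω | c' ≤ φ x} ≠ ⊤ := measure_ne_top_of_subset (sep_subset _ _) hfin
  exact (ENNReal.le_ofReal_iff_toReal_le hfin' hm).2 (hlt c' hc').le

lemma ae_norm_le_one_of_mem_admissible (hΩ : MeasurableSet Ω) (hθ : θ ∈ admissible μ Ω m) :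
    ∀ᵐ x ∂μ.restrict Ω, ‖θ x‖ ≤ 1 := by
  filter_upwards [ae_restrict_mem hΩ] with x hx
  obtain ⟨h0, h1⟩ := hθ.2.1 x hx
  rwa [Real.norm_of_nonneg h0]

lemma integrableOn_of_mem_admissible (hΩ : MeasurableSet Ω) (hfin : μ Ω ≠ ⊤)
    (hθ : θ ∈ admissible μ Ω m) : IntegrableOn θ Ω μ :=
  Measure.integrableOn_of_bounded hfin hθ.1.aestronglyMeasurable
    (ae_norm_le_one_of_mem_admissible hΩ hθ)

lemma integrableOn_mul_of_mem_admissible (hΩ : MeasurableSet Ω) (hφ : IntegrableOn φ Ω μ)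
    (hθ : θ ∈ admissible μ Ω m) : IntegrableOn (fun x => θ x * φ x) Ω μ :=
  hφ.bdd_mul hθ.1.aestronglyMeasurable.restrict (ae_norm_le_one_of_mem_admissible hΩ hθ)

section Exchange

variable (hΩ : MeasurableSet Ω) (hfin : μ Ω ≠ ⊤) (hφ : IntegrableOn φ Ω μ)
  (hθ₁ : θ₁ ∈ admissible μ Ω m) (hθ₂ : θ₂ ∈ admissible μ Ω m)
include hΩ hfin hφ hθ₁ hθ₂

lemma integrableOn_sub_mul_sub :
    IntegrableOn (fun x => (θ₁ x - θ₂ x) * (φ x - c)) Ω μ := by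
  have hi₁ := integrableOn_of_mem_admissible hΩ hfin hθ₁
  have hi₂ := integrableOn_of_mem_admissible hΩ hfin hθ₂
  have hm₁ := integrableOn_mul_of_mem_admissible hΩ hφ hθ₁
  have hm₂ := integrableOn_mul_of_mem_admissible hΩ hφ hθ₂
  refine (((hm₁.sub hm₂).sub ((hi₁.sub hi₂).mul_const c))).congr_fun (fun x _ => ?_) hΩ
  simp only [Pi.sub_apply]
  ring

/-- Since `θ₁` and `θ₂` have the same mass, the level `c` can be subtracted from `φ` for free. -/
lemma setIntegral_sub_mul_sub :
    ∫ x in Ω, (θ₁ x - θ₂ x) * (φ x - c) ∂μ =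
      ∫ x in Ω, θ₁ x * φ x ∂μ - ∫ x in Ω, θ₂ x * φ x ∂μ := by
  have hi₁ := integrableOn_of_mem_admissible hΩ hfin hθ₁
  have hi₂ := integrableOn_of_mem_admissible hΩ hfin hθ₂
  have hm₁ := integrableOn_mul_of_mem_admissible hΩ hφ hθ₁
  have hm₂ := integrableOn_mul_of_mem_admissible hΩ hφ hθ₂
  calc ∫ x in Ω, (θ₁ x - θ₂ x) * (φ x - c) ∂μ
      = ∫ x in Ω, ((θ₁ x * φ x - θ₂ x * φ x) - (θ₁ x - θ₂ x) * c) ∂μ := by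
        congr 1; ext x; ring
    _ = (∫ x in Ω, θ₁ x * φ x ∂μ - ∫ x in Ω, θ₂ x * φ x ∂μ) - (m - m) * c := by
        rw [integral_sub, integral_sub hm₁ hm₂, integral_mul_const, integral_sub hi₁ hi₂,
          hθ₁.2.2, hθ₂.2.2]
        exacts [hm₁.sub hm₂, (hi₁.sub hi₂).mul_const c]
    _ = ∫ x in Ω, θ₁ x * φ x ∂μ - ∫ x in Ω, θ₂ x * φ x ∂μ := by ring

end Exchange

/-- Interpolating between the indicators of `{φ > c}` and `{φ ≥ c}` fills the level set
`{φ = c}` to exactly the fraction needed for mass `m`. -/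
lemma exists_mem_admissible_fillsAbove (hΩ : MeasurableSet Ω) (hfin : μ Ω ≠ ⊤)
    (hφm : Measurable φ) (ha : (μ {x ∈ Ω | c < φ x}).toReal ≤ m)
    (hb : m ≤ (μ {x ∈ Ω | c ≤ φ x}).toReal) :
    ∃ θ ∈ admissible μ Ω m, FillsAbove μ Ω φ c θ := by
  obtain ⟨t, ⟨ht₀, ht₁⟩, ht⟩ : ∃ t ∈ Icc (0 : ℝ) 1,
      (1 - t) • (μ {x ∈ Ω | c < φ x}).toReal + t • (μ {x ∈ Ω | c ≤ φ x}).toReal = m := by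
    rw [← mem_image, ← segment_eq_image, segment_eq_Icc (ha.trans hb)]
    exact ⟨ha, hb⟩
  have hA : MeasurableSet {x | c < φ x} := measurableSet_lt measurable_const hφm
  have hB : MeasurableSet {x | c ≤ φ x} := measurableSet_le measurable_const hφm
  set θ : X → ℝ := fun x =>
    (1 - t) * {x | c < φ x}.indicator 1 x + t * {x | c ≤ φ x}.indicator 1 x
  refine ⟨θ, ⟨?_, fun x _ => ?_, ?_⟩, ?_, ?_⟩
  · exact (measurable_const.mul (measurable_const.indicator hA)).add
      (measurable_const.mul (measurable_const.indicator hB))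
  · by_cases hlt : c < φ x
    · simp [θ, hlt, hlt.le]
    · by_cases hle : c ≤ φ x <;> simp [θ, hlt, hle, ht₀, ht₁]
  · have hi : ∀ {s : Set X}, MeasurableSet s → IntegrableOn (s.indicator 1) Ω μ :=
      fun hs => (integrableOn_const hfin (C := (1 : ℝ))).indicator hs
    rw [← ht, integral_add ((hi hA).const_mul _) ((hi hB).const_mul _), integral_const_mul,
      integral_const_mul, setIntegral_indicator hA, setIntegral_indicator hB]
    simp only [Pi.one_apply, setIntegral_const, measureReal_def, smul_eq_mul, mul_one]
    rfl
  · filter_upwards [ae_restrict_mem (hΩ.inter hA)] with x hx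
    simp [θ, hx.2, hx.2.le]
  · filter_upwards [ae_restrict_mem (hΩ.inter (measurableSet_lt hφm measurable_const))] with x hx
    simp [θ, hx.2.not_gt, hx.2.not_ge]

section Comparison

variable (hΩ : MeasurableSet Ω) (hφm : Measurable φ)
include hΩ hφm

lemma FillsAbove.ae_nonneg_sub_mul_sub (h : FillsAbove μ Ω φ c θ₁)
    (hθ₂ : ∀ x ∈ Ω, θ₂ x ∈ Icc (0 : ℝ) 1) :
    0 ≤ᵐ[μ.restrict Ω] fun x => (θ₁ x - θ₂ x) * (φ x - c) := by
  have h₁ := (ae_restrict_iff' (hΩ.inter (measurableSet_lt measurable_const hφm))).1 h.1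
  have h₀ := (ae_restrict_iff' (hΩ.inter (measurableSet_lt hφm measurable_const))).1 h.2
  refine (ae_restrict_iff' hΩ).2 ?_
  filter_upwards [h₁, h₀] with x h₁ h₀ hx
  rcases lt_trichotomy (φ x) c with hlt | heq | hgt
  · rw [h₀ ⟨hx, hlt⟩]
    exact mul_nonneg_of_nonpos_of_nonpos (by linarith [(hθ₂ x hx).1]) (by linarith)
  · simp [heq]
  · rw [h₁ ⟨hx, hgt⟩]
    exact mul_nonneg (sub_nonneg.2 (hθ₂ x hx).2) (sub_nonneg.2 hgt.le)

lemma FillsAbove.of_ae_sub_mul_sub_eq_zero (h : FillsAbove μ Ω φ c θ₁)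
    (h₀ : (fun x => (θ₁ x - θ₂ x) * (φ x - c)) =ᵐ[μ.restrict Ω] 0) :
    FillsAbove μ Ω φ c θ₂ := by
  constructor
  · filter_upwards [h.1, ae_restrict_of_ae_restrict_of_subset (sep_subset _ _) h₀,
      ae_restrict_mem (hΩ.inter (measurableSet_lt measurable_const hφm))] with x h₁ hz hx
    have := (mul_eq_zero.1 (h₁ ▸ hz)).resolve_right (sub_ne_zero.2 hx.2.ne')
    linarith
  · filter_upwards [h.2, ae_restrict_of_ae_restrict_of_subset (sep_subset _ _) h₀,
      ae_restrict_mem (hΩ.inter (measurableSet_lt hφm measurable_const))] with x h₁ hz hx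
    have := (mul_eq_zero.1 (h₁ ▸ hz)).resolve_right (sub_ne_zero.2 hx.2.ne)
    linarith

variable (hfin : μ Ω ≠ ⊤) (hφ : IntegrableOn φ Ω μ)
include hfin hφ

theorem FillsAbove.setIntegral_mul_le (h : FillsAbove μ Ω φ c θ₁)
    (hθ₁ : θ₁ ∈ admissible μ Ω m) (hθ₂ : θ₂ ∈ admissible μ Ω m) :
    ∫ x in Ω, θ₂ x * φ x ∂μ ≤ ∫ x in Ω, θ₁ x * φ x ∂μ := by
  have := integral_nonneg_of_ae (h.ae_nonneg_sub_mul_sub hΩ hφm hθ₂.2.1)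
  rw [setIntegral_sub_mul_sub hΩ hfin hφ hθ₁ hθ₂] at this
  linarith

theorem FillsAbove.of_setIntegral_mul_le (h : FillsAbove μ Ω φ c θ₁)
    (hθ₁ : θ₁ ∈ admissible μ Ω m) (hθ₂ : θ₂ ∈ admissible μ Ω m)
    (hle : ∫ x in Ω, θ₁ x * φ x ∂μ ≤ ∫ x in Ω, θ₂ x * φ x ∂μ) : FillsAbove μ Ω φ c θ₂ := by
  refine h.of_ae_sub_mul_sub_eq_zero hΩ hφm ((integral_eq_zero_iff_of_nonneg_ae
    (h.ae_nonneg_sub_mul_sub hΩ hφm hθ₂.2.1) (integrableOn_sub_mul_sub hΩ hfin hφ hθ₁ hθ₂)).1 ?_)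
  rw [setIntegral_sub_mul_sub hΩ hfin hφ hθ₁ hθ₂]
  linarith [h.setIntegral_mul_le hΩ hφm hfin hφ hθ₁ hθ₂]

end Comparison

end Bathtub

theorem stmt8_general {d : ℕ} (Ω : Set (Fin d → ℝ)) (hΩ : MeasurableSet Ω)
    (hfin : volume Ω ≠ ⊤)
    (α : ℝ)
    (φ : (Fin d → ℝ) → ℝ) (hφm : Measurable φ) (hφ : IntegrableOn φ Ω)
    (cφ : ℝ)
    (hc : IsGreatest {c : ℝ | α * (volume Ω).toReal ≤ (volume {x ∈ Ω | c ≤ φ x}).toReal} cφ) :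
    (∃ θb : (Fin d → ℝ) → ℝ,
      (Measurable θb ∧ (∀ x ∈ Ω, θb x ∈ Set.Icc (0:ℝ) 1) ∧
        ∫ x in Ω, θb x = α * (volume Ω).toReal) ∧
      ∀ θ : (Fin d → ℝ) → ℝ,
        (Measurable θ ∧ (∀ x ∈ Ω, θ x ∈ Set.Icc (0:ℝ) 1) ∧
          ∫ x in Ω, θ x = α * (volume Ω).toReal) →
        ∫ x in Ω, θ x * φ x ≤ ∫ x in Ω, θb x * φ x) ∧
    (∀ θb : (Fin d → ℝ) → ℝ,
      (Measurable θb ∧ (∀ x ∈ Ω, θb x ∈ Set.Icc (0:ℝ) 1) ∧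
        ∫ x in Ω, θb x = α * (volume Ω).toReal) →
      ((∀ θ : (Fin d → ℝ) → ℝ,
          (Measurable θ ∧ (∀ x ∈ Ω, θ x ∈ Set.Icc (0:ℝ) 1) ∧
            ∫ x in Ω, θ x = α * (volume Ω).toReal) →
          ∫ x in Ω, θ x * φ x ≤ ∫ x in Ω, θb x * φ x)
        ↔ ((∀ᵐ x ∂(volume.restrict {x ∈ Ω | cφ < φ x}), θb x = 1) ∧
           (∀ᵐ x ∂(volume.restrict {x ∈ Ω | φ x < cφ}), θb x = 0)))) := by
  obtain ⟨θ₀, hθ₀, hfill⟩ := Bathtub.exists_mem_admissible_fillsAbove hΩ hfin hφm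
    (Bathtub.toReal_measure_sep_lt_le_of_isGreatest hfin hc) hc.1
  refine ⟨⟨θ₀, hθ₀, fun θ hθ => hfill.setIntegral_mul_le hΩ hφm hfin hφ hθ₀ hθ⟩,
    fun θb hθb => ⟨fun hmax => hfill.of_setIntegral_mul_le hΩ hφm hfin hφ hθ₀ hθb (hmax θ₀ hθ₀),
      fun hθb_fill θ hθ => Bathtub.FillsAbove.setIntegral_mul_le hΩ hφm hfin hφ hθb_fill hθb hθ⟩⟩

theorem stmt8 {d : ℕ} (Ω : Set (Fin d → ℝ)) (hΩ : MeasurableSet Ω)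
    (hpos : 0 < volume Ω) (hfin : volume Ω ≠ ⊤)
    (α : ℝ) (hα : α ∈ Set.Ioo (0:ℝ) 1)
    (φ : (Fin d → ℝ) → ℝ) (hφm : Measurable φ) (hφ : IntegrableOn φ Ω)
    (cφ : ℝ)
    (hc : IsGreatest {c : ℝ | α * (volume Ω).toReal ≤ (volume {x ∈ Ω | c ≤ φ x}).toReal} cφ) :
    (∃ θb : (Fin d → ℝ) → ℝ,
      (Measurable θb ∧ (∀ x ∈ Ω, θb x ∈ Set.Icc (0:ℝ) 1) ∧
        ∫ x in Ω, θb x = α * (volume Ω).toReal) ∧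
      ∀ θ : (Fin d → ℝ) → ℝ,
        (Measurable θ ∧ (∀ x ∈ Ω, θ x ∈ Set.Icc (0:ℝ) 1) ∧
          ∫ x in Ω, θ x = α * (volume Ω).toReal) →
        ∫ x in Ω, θ x * φ x ≤ ∫ x in Ω, θb x * φ x) ∧
    (∀ θb : (Fin d → ℝ) → ℝ,
      (Measurable θb ∧ (∀ x ∈ Ω, θb x ∈ Set.Icc (0:ℝ) 1) ∧
        ∫ x in Ω, θb x = α * (volume Ω).toReal) →
      ((∀ θ : (Fin d → ℝ) → ℝ,
          (Measurable θ ∧ (∀ x ∈ Ω, θ x ∈ Set.Icc (0:ℝ) 1) ∧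
            ∫ x in Ω, θ x = α * (volume Ω).toReal) →
          ∫ x in Ω, θ x * φ x ≤ ∫ x in Ω, θb x * φ x)
        ↔ ((∀ᵐ x ∂(volume.restrict {x ∈ Ω | cφ < φ x}), θb x = 1) ∧
           (∀ᵐ x ∂(volume.restrict {x ∈ Ω | φ x < cφ}), θb x = 0)))) :=
  stmt8_general Ω hΩ hfin α φ hφm hφ cφ hc
end
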